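/- Let 2 ≤ k < q, r = q − k, and u ∈ 𝔽_q^q. Then u = u_{a x^k + g} for some a ∈ 𝔽_q with a ≠ 0 and some g ∈ S_{k,θ} (i.e., u is a standard deep hole of TRS_k(𝔽_q, θ)) if and only if the syndrome H·u^T equals (0, 0, …, 0, w_{r-1})^T for some w_{r-1} ∈ 𝔽_q with w_{r-1} ≠ 0. -/

import Mathlib

open Polynomial Finset

/-- The set `S_{k,θ}` of twisted polynomials
`Σ_{i=0}^{k-2} f_i x^i + f_{k-1}(x^{k-1} + θ x^k)`. -/
def Sset (F : Type*) [Field F] (k : ℕ) (θ : F) : Set (Polynomial F) :=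
  {p | ∃ f : ℕ → F, p = (∑ i ∈ Finset.range (k - 1), Polynomial.C (f i) * Polynomial.X ^ i)
        + Polynomial.C (f (k - 1)) * (Polynomial.X ^ (k - 1) + Polynomial.C θ * Polynomial.X ^ k)}

/-- The twisted Reed–Solomon code `TRS_k(A, θ)` for the evaluation sequence `α`. -/
def TRS {F : Type*} [Field F] {n : ℕ} (α : Fin n → F) (k : ℕ) (θ : F) : Set (Fin n → F) :=
  {v | ∃ p ∈ Sset F k θ, v = fun j => p.eval (α j)}

/-- The (Hamming) error distance `d(u, C)` from a word `u` to a code `C`. -/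
noncomputable def distTo {F : Type*} [DecidableEq F] {n : ℕ} (u : Fin n → F)
    (C : Set (Fin n → F)) : ℕ :=
  sInf {d | ∃ c ∈ C, hammingDist u c = d}

/-- The covering radius `ρ(C) = max_u d(u, C)` of a code `C`. -/
noncomputable def covRad {F : Type*} [DecidableEq F] {n : ℕ} (C : Set (Fin n → F)) : ℕ :=
  sSup {d | ∃ u, distTo u C = d}

/-- `u` is a deep hole of `C` if `d(u, C) = ρ(C)`. -/
def IsDeepHole {F : Type*} [DecidableEq F] {n : ℕ} (C : Set (Fin n → F)) (u : Fin n → F) :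
    Prop :=
  distTo u C = covRad C

/-- The column vector `c_{r,θ}(a) = (1, a, …, a^{r-2}, a^{r-1} - θ a^r)ᵀ ∈ 𝔽_q^r`. -/
def crv (F : Type*) [Field F] (r : ℕ) (θ a : F) : Fin r → F :=
  fun i => if (i : ℕ) = r - 1 then a ^ (r - 1) - θ * a ^ r else a ^ (i : ℕ)

/-- The parity-check matrix `H` whose `j`-th column is `c_{r,θ}(α_j)`. -/
def Hmat {F : Type*} [Field F] {n : ℕ} (r : ℕ) (θ : F) (α : Fin n → F) :
    Matrix (Fin r) (Fin n) F :=
  Matrix.of fun i j => crv F r θ (α j) i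

/-!
Write `u` as the values of its interpolating polynomial `f` with `deg f < q`. The power sums
`∑_{x ∈ 𝔽_q} x ^ m` vanish for `m < 2 (q - 1)` except at `m = q - 1`, where they equal `-1`; hence
`∑_x x ^ e f(x) = -f_{q-1-e}` for `e < q - 1`. So row `i < r - 1` of the syndrome is `-f_{q-1-i}`
and the last row is `θ f_{k-1} - f_k`, and the syndrome has the stated shape exactly when
`deg f ≤ k` and `f_k - θ f_{k-1} ≠ 0`. That is also the coefficient description of the coset
`{a x^k + g : g ∈ S_{k,θ}}` with `a ≠ 0`, since `g ∈ S_{k,θ}` iff `deg g ≤ k` and `g_k = θ g_{k-1}`.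
-/

namespace FiniteField

variable {K : Type*} [Field K] [Fintype K]

theorem sum_pow_eq_ite {i : ℕ} (hi : i < 2 * (Fintype.card K - 1)) :
    ∑ x : K, x ^ i = if i = Fintype.card K - 1 then -1 else 0 := by
  classical
  rcases lt_or_ge i (Fintype.card K - 1) with hlt | hge
  · rw [sum_pow_lt_card_sub_one K i hlt, if_neg hlt.ne]
  have hq : 2 ≤ Fintype.card K := Fintype.one_lt_card
  have hsum : ∑ x : K, x ^ i = ∑ x : Kˣ, (x ^ i : K) := by
    have hzero (x : {x : K // ¬x ≠ 0}) : (x : K) ^ i = 0 := by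
      rw [not_not.mp x.2, zero_pow (by omega)]
    rw [← Fintype.sum_subtype_add_sum_subtype (· ≠ (0 : K)), sum_eq_zero fun x _ => hzero x,
      add_zero]
    exact Fintype.sum_equiv unitsEquivNeZero.symm _ _ fun x => rfl
  have hdvd : Fintype.card K - 1 ∣ i ↔ i = Fintype.card K - 1 := by
    refine ⟨fun h => ?_, fun h => h ▸ dvd_rfl⟩
    have := Nat.eq_zero_of_dvd_of_lt (Nat.dvd_sub h dvd_rfl) (by omega : i - _ < _)
    omega
  rw [hsum, sum_pow_units, if_congr hdvd rfl rfl]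

theorem sum_eval_eq_neg_coeff {p : K[X]} (hp : p.natDegree < 2 * (Fintype.card K - 1)) :
    ∑ x : K, p.eval x = -p.coeff (Fintype.card K - 1) := by
  have hq : 2 ≤ Fintype.card K := Fintype.one_lt_card
  calc ∑ x : K, p.eval x
      = ∑ x : K, ∑ m ∈ range (2 * (Fintype.card K - 1)), p.coeff m * x ^ m :=
        sum_congr rfl fun x _ => eval_eq_sum_range' hp x
    _ = ∑ m ∈ range (2 * (Fintype.card K - 1)), p.coeff m * ∑ x : K, x ^ m := by
        rw [sum_comm]; simp only [mul_sum]
    _ = -p.coeff (Fintype.card K - 1) := by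
        rw [sum_congr rfl fun m hm => by rw [sum_pow_eq_ite (mem_range.mp hm)]]
        simp only [mul_ite, mul_neg, mul_one, mul_zero, sum_ite_eq', mem_range]
        rw [if_pos (by omega)]

theorem sum_pow_mul_eval_eq_neg_coeff {f : K[X]} (hf : f.natDegree < Fintype.card K) {e : ℕ}
    (he : e < Fintype.card K - 1) :
    ∑ x : K, x ^ e * f.eval x = -f.coeff (Fintype.card K - 1 - e) := by
  have hdeg : (X ^ e * f).natDegree < 2 * (Fintype.card K - 1) :=
    natDegree_mul_le.trans_lt (by rw [natDegree_X_pow]; omega)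
  simpa [coeff_X_pow_mul', he.le] using sum_eval_eq_neg_coeff hdeg

end FiniteField

section TwistedPolynomials

variable {F : Type*} [Field F] {k : ℕ} {θ : F}

theorem coeff_twisted (hk : 1 ≤ k) (c : ℕ → F) (m : ℕ) :
    ((∑ i ∈ range (k - 1), C (c i) * X ^ i) + C (c (k - 1)) * (X ^ (k - 1) + C θ * X ^ k)).coeff m
      = if m < k - 1 then c m else if m = k - 1 then c (k - 1)
        else if m = k then θ * c (k - 1) else 0 := by
  simp only [coeff_add, finsetSum_coeff, coeff_C_mul, coeff_X_pow, mul_ite, mul_one, mul_zero,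
    sum_ite_eq, mem_range, mul_add]
  split_ifs <;> first | (exfalso; omega) | ring

theorem mem_Sset_iff (hk : 1 ≤ k) {g : F[X]} :
    g ∈ Sset F k θ ↔ g.natDegree ≤ k ∧ g.coeff k = θ * g.coeff (k - 1) := by
  rw [natDegree_le_iff_coeff_eq_zero]
  constructor
  · rintro ⟨c, rfl⟩
    refine ⟨fun m hm => ?_, ?_⟩
    · rw [coeff_twisted hk, if_neg (by omega), if_neg (by omega), if_neg (by omega)]
    · simp [coeff_twisted hk, show k ≠ k - 1 by omega]
  · rintro ⟨hhigh, htwist⟩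
    refine ⟨g.coeff, ext fun m => ?_⟩
    rw [coeff_twisted hk]
    split_ifs with h₁ h₂ h₃
    · rfl
    · rw [h₂]
    · rw [h₃, htwist]
    · exact hhigh m (by omega)

theorem exists_C_mul_X_pow_add_mem_Sset_iff (hk : 1 ≤ k) (f : F[X]) :
    (∃ a : F, a ≠ 0 ∧ ∃ g ∈ Sset F k θ, f = C a * X ^ k + g) ↔
      f.natDegree ≤ k ∧ f.coeff k - θ * f.coeff (k - 1) ≠ 0 := by
  constructor
  · rintro ⟨a, ha, g, hg, rfl⟩
    obtain ⟨hdeg, htwist⟩ := (mem_Sset_iff hk).1 hg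
    refine ⟨natDegree_add_le_of_degree_le (natDegree_C_mul_X_pow_le a k) hdeg, ?_⟩
    simpa [show k - 1 ≠ k by omega, htwist] using ha
  · rintro ⟨hdeg, hlead⟩
    set a := f.coeff k - θ * f.coeff (k - 1) with ha
    refine ⟨a, hlead, f - C a * X ^ k, (mem_Sset_iff hk).2 ⟨?_, ?_⟩, by ring⟩
    · exact (natDegree_sub_le_of_le hdeg (natDegree_C_mul_X_pow_le a k)).trans_eq (max_self k)
    · rw [coeff_sub, coeff_sub, coeff_C_mul_X_pow, coeff_C_mul_X_pow, if_pos rfl,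
        if_neg (by omega), ha]
      ring

end TwistedPolynomials

section Syndrome

variable {F : Type*} [Field F] [Fintype F] {θ : F}

theorem Hmat_mulVec_eval_apply {n r : ℕ} {α : Fin n → F} (hα : Function.Bijective α) (f : F[X])
    (i : Fin r) :
    (Hmat r θ α).mulVec (fun j => f.eval (α j)) i = ∑ x : F, crv F r θ x i * f.eval x :=
  Fintype.sum_bijective α hα _ _ fun _ => rfl

theorem sum_crv_mul_eval {k : ℕ} (hk : 2 ≤ k) {f : F[X]} (hf : f.natDegree < Fintype.card F)
    (i : Fin (Fintype.card F - k)) :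
    ∑ x : F, crv F (Fintype.card F - k) θ x i * f.eval x =
      if (i : ℕ) = Fintype.card F - k - 1 then θ * f.coeff (k - 1) - f.coeff k
      else -f.coeff (Fintype.card F - 1 - i) := by
  have hi := i.isLt
  unfold crv
  split_ifs with hlast
  · simp only [sub_mul, sum_sub_distrib, mul_assoc, ← mul_sum,
      FiniteField.sum_pow_mul_eval_eq_neg_coeff hf (by omega : Fintype.card F - k - 1 < _),
      FiniteField.sum_pow_mul_eval_eq_neg_coeff hf (by omega : Fintype.card F - k < _),
      show Fintype.card F - 1 - (Fintype.card F - k - 1) = k by omega,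
      show Fintype.card F - 1 - (Fintype.card F - k) = k - 1 by omega]
    ring
  · exact FiniteField.sum_pow_mul_eval_eq_neg_coeff hf (by omega)

theorem exists_Hmat_mulVec_eval_eq_iff {n k : ℕ} {α : Fin n → F} (hα : Function.Bijective α)
    (hk : 2 ≤ k) (hkq : k < Fintype.card F) {f : F[X]} (hf : f.natDegree < Fintype.card F) :
    (∃ c : F, c ≠ 0 ∧ (Hmat (Fintype.card F - k) θ α).mulVec (fun j => f.eval (α j)) =
        fun i : Fin (Fintype.card F - k) => if (i : ℕ) = Fintype.card F - k - 1 then c else 0) ↔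
      f.natDegree ≤ k ∧ f.coeff k - θ * f.coeff (k - 1) ≠ 0 := by
  simp only [funext_iff, Hmat_mulVec_eval_apply hα, sum_crv_mul_eval hk hf,
    natDegree_le_iff_coeff_eq_zero]
  constructor
  · rintro ⟨c, hc, hsyn⟩
    refine ⟨fun m hm => ?_, ?_⟩
    · rcases lt_or_ge m (Fintype.card F) with hmq | hmq
      · simpa [show Fintype.card F - 1 - m ≠ Fintype.card F - k - 1 by omega,
          show Fintype.card F - 1 - (Fintype.card F - 1 - m) = m by omega]
          using hsyn ⟨Fintype.card F - 1 - m, by omega⟩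
      · exact coeff_eq_zero_of_natDegree_lt (hf.trans_le hmq)
    · have hlast := hsyn ⟨Fintype.card F - k - 1, by omega⟩
      simp only [if_true] at hlast
      rw [← neg_sub, hlast]
      exact neg_ne_zero.2 hc
  · rintro ⟨hhigh, hlead⟩
    refine ⟨θ * f.coeff (k - 1) - f.coeff k, by rwa [← neg_sub, neg_ne_zero], fun i => ?_⟩
    split_ifs with hlast
    · rfl
    · rw [hhigh _ (by omega), neg_zero]

end Syndrome

section Interpolation

variable {F : Type*} [Field F] [Fintype F] {n : ℕ} {α : Fin n → F}

theorem exists_natDegree_lt_card_eq_eval (hα : Function.Bijective α) (u : Fin n → F) :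
    ∃ f : F[X], f.natDegree < Fintype.card F ∧ u = fun j => f.eval (α j) := by
  have hinj : Set.InjOn α (univ : Finset (Fin n)) := hα.1.injOn
  refine ⟨Lagrange.interpolate univ α u, ?_,
    funext fun j => (Lagrange.eval_interpolate_at_node u hinj (mem_univ j)).symm⟩
  have hdeg := Lagrange.degree_interpolate_lt (r := u) hinj
  rw [card_univ, Fintype.card_of_bijective hα] at hdeg
  rcases eq_or_ne (Lagrange.interpolate univ α u) 0 with h0 | h0
  · rw [h0, natDegree_zero]
    exact Fintype.card_pos
  · exact (natDegree_lt_iff_degree_lt h0).2 hdeg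

theorem eval_comp_eq_iff (hα : Function.Surjective α) {f g : F[X]}
    (hf : f.natDegree < Fintype.card F) (hg : g.natDegree < Fintype.card F) :
    ((fun j => f.eval (α j)) = fun j => g.eval (α j)) ↔ f = g := by
  refine ⟨fun h => eq_of_degrees_lt_of_eval_finset_eq univ ?_ ?_ fun x _ => ?_, fun h => h ▸ rfl⟩
  · exact degree_le_natDegree.trans_lt (by simpa using hf)
  · exact degree_le_natDegree.trans_lt (by simpa using hg)
  · obtain ⟨j, rfl⟩ := hα x
    exact congrFun h j

end Interpolation

theorem standard_deep_hole_iff_syndrome_general {F : Type*} [Field F] [Fintype F]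
    (q : ℕ) (hq : q = Fintype.card F) (k : ℕ) (hk2 : 2 ≤ k) (hkq : k < q)
    (θ : F) (α : Fin q → F) (hα : Function.Bijective α) (u : Fin q → F) :
    (∃ a : F, a ≠ 0 ∧ ∃ g ∈ Sset F k θ,
        u = fun j => (Polynomial.C a * Polynomial.X ^ k + g).eval (α j)) ↔
      ∃ c : F, c ≠ 0 ∧
        (Hmat (q - k) θ α).mulVec u = fun i : Fin (q - k) => if (i : ℕ) = q - k - 1 then c else 0 := by
  subst hq
  obtain ⟨f, hf, rfl⟩ := exists_natDegree_lt_card_eq_eval hα u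
  rw [exists_Hmat_mulVec_eval_eq_iff hα hk2 hkq hf,
    ← exists_C_mul_X_pow_add_mem_Sset_iff (by omega)]
  refine exists_congr fun a => and_congr_right fun _ =>
    exists_congr fun g => and_congr_right fun hg => eval_comp_eq_iff hα.2 hf ?_
  exact (natDegree_add_le_of_degree_le (natDegree_C_mul_X_pow_le a k)
    ((mem_Sset_iff (by omega)).1 hg).1).trans_lt hkq

/-- For `2 ≤ k < q`, `r = q - k` and `u ∈ 𝔽_q^q`: `u` is a standard deep
hole, i.e. `u = u_{a x^k + g}` with `a ≠ 0` and `g ∈ S_{k,θ}`, iff the syndrome `H·uᵀ` is of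
the form `(0, …, 0, w_{r-1})ᵀ` with `w_{r-1} ≠ 0`. -/
theorem standard_deep_hole_iff_syndrome {F : Type*} [Field F] [Fintype F] [DecidableEq F]
    (q : ℕ) (hq : q = Fintype.card F) (k : ℕ) (hk2 : 2 ≤ k) (hkq : k < q)
    (θ : F) (hθ : θ ≠ 0) (α : Fin q → F) (hα : Function.Bijective α) (u : Fin q → F) :
    (∃ a : F, a ≠ 0 ∧ ∃ g ∈ Sset F k θ,
        u = fun j => (Polynomial.C a * Polynomial.X ^ k + g).eval (α j)) ↔
      ∃ c : F, c ≠ 0 ∧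
        (Hmat (q - k) θ α).mulVec u = fun i : Fin (q - k) => if (i : ℕ) = q - k - 1 then c else 0 :=
  standard_deep_hole_iff_syndrome_general q hq k hk2 hkq θ α hα u
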